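/- arXiv:1105.2132 — 5 statements merged into one kernel-verified Lean document; each statement's English description precedes it below -/
import Mathlib

section
/- A nonempty closed subset Ω of a normed space X is convex if and only if the distance function x ↦ d(x, Ω) = inf{‖x − ω‖ : ω ∈ Ω} is a convex function on X. -/
/-!
If `Ω` is convex, convex combinations of near-nearest points of `Ω` to `x` and `y` lie in `Ω`,
which bounds `d(a • x + b • y, Ω)` by `a d(x, Ω) + b d(y, Ω)` up to any `ε > 0`. Conversely,
`Ω` is the sublevel set `{x | d(x, Ω) ≤ 0}` of its distance function when it is closed and
nonempty, and sublevel sets of convex functions are convex.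
-/

open Metric Set

theorem IsClosed.setOf_infDist_le_zero {M : Type*} [PseudoMetricSpace M] {s : Set M}
    (hs : IsClosed s) (hne : s.Nonempty) : {x | infDist x s ≤ 0} = s := by
  ext x
  rw [mem_ofPred_eq, hs.mem_iff_infDist_zero hne]
  exact ⟨fun h => le_antisymm h infDist_nonneg, le_of_eq⟩

section

variable {X : Type*} [NormedAddCommGroup X] [NormedSpace ℝ X]

theorem dist_convexCombination_le {a b : ℝ} (ha : 0 ≤ a) (hb : 0 ≤ b) (x y u v : X) :
    dist (a • x + b • y) (a • u + b • v) ≤ a * dist x u + b * dist y v :=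
  calc dist (a • x + b • y) (a • u + b • v)
      ≤ dist (a • x) (a • u) + dist (b • y) (b • v) := dist_add_add_le _ _ _ _
    _ = a * dist x u + b * dist y v := by
      rw [dist_smul₀, dist_smul₀, Real.norm_of_nonneg ha, Real.norm_of_nonneg hb]

theorem Convex.convexOn_infDist {s : Set X} (hs : Convex ℝ s) :
    ConvexOn ℝ univ (infDist · s) := by
  rcases s.eq_empty_or_nonempty with rfl | hne
  · simpa only [infDist_empty] using convexOn_const (0 : ℝ) convex_univ
  refine ⟨convex_univ, fun x _ y _ a b ha hb hab => le_of_forall_pos_le_add fun ε hε => ?_⟩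
  obtain ⟨u, hu, hxu⟩ := (infDist_lt_iff hne).1 (lt_add_of_pos_right (infDist x s) hε)
  obtain ⟨v, hv, hyv⟩ := (infDist_lt_iff hne).1 (lt_add_of_pos_right (infDist y s) hε)
  calc infDist (a • x + b • y) s
      ≤ dist (a • x + b • y) (a • u + b • v) := infDist_le_dist_of_mem (hs hu hv ha hb hab)
    _ ≤ a * dist x u + b * dist y v := dist_convexCombination_le ha hb x y u v
    _ ≤ a * (infDist x s + ε) + b * (infDist y s + ε) := by gcongr
    _ = a * infDist x s + b * infDist y s + ε := by
      linear_combination ε * hab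

end

/-- A nonempty closed subset of a normed space is convex if and only if
its distance function is convex. -/
theorem convex_iff_convexOn_infDist
    {X : Type*} [NormedAddCommGroup X] [NormedSpace ℝ X]
    (Ω : Set X) (hne : Ω.Nonempty) (hcl : IsClosed Ω) :
    Convex ℝ Ω ↔ ConvexOn ℝ Set.univ (fun x => Metric.infDist x Ω) := by
  refine ⟨Convex.convexOn_infDist, fun hf => ?_⟩
  simpa only [mem_univ, true_and, hcl.setOf_infDist_le_zero hne] using hf.convex_le 0
end

section
/- In ℝ² with the Euclidean norm, let Ω₁ = {0} × ℝ and Ω₂ = {(x, y) : x > 0, y ≥ 1/x}. Then the function D(p) = max{d(p, Ω₁), d(p, Ω₂)} has infimum 0 over ℝ² but D(p) > 0 for every p ∈ ℝ², so the smallest intersecting ball problem generated by Ω₁ and Ω₂ has no solution. -/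
/-!
The closures of Ω₁ and Ω₂ are disjoint (the closure of Ω₂ lies in {xy ≥ 1}, which misses the
axis), so no point is at distance zero from both and `D` never vanishes. On the other hand the
points (0, 1/ε) ∈ Ω₁ and (ε, 1/ε) ∈ Ω₂ are ε apart, so `D (0, 1/ε) ≤ ε`.
-/

open Metric

section InfDist

variable {α : Type*} [PseudoMetricSpace α] {s t : Set α}

lemma iInf_max_infDist_eq_zero (hst : ∀ ε > 0, ∃ x ∈ s, ∃ y ∈ t, dist x y ≤ ε) :
    ⨅ p, max (infDist p s) (infDist p t) = 0 := by
  have hnonneg : ∀ p, 0 ≤ max (infDist p s) (infDist p t) :=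
    fun p => infDist_nonneg.trans (le_max_left _ _)
  refine le_antisymm (le_of_forall_pos_le_add fun ε hε => ?_) (Real.iInf_nonneg hnonneg)
  obtain ⟨x, hx, y, hy, hxy⟩ := hst ε hε
  calc ⨅ p, max (infDist p s) (infDist p t)
      ≤ max (infDist x s) (infDist x t) := ciInf_le ⟨0, by rintro _ ⟨p, rfl⟩; exact hnonneg p⟩ x
    _ ≤ 0 + ε := by
      rw [infDist_zero_of_mem hx, zero_add]
      exact max_le hε.le ((infDist_le_dist_of_mem hy).trans hxy)

lemma max_infDist_pos (hs : s.Nonempty) (ht : t.Nonempty)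
    (hst : Disjoint (closure s) (closure t)) (p : α) :
    0 < max (infDist p s) (infDist p t) := by
  rw [lt_max_iff, ← infDist_pos_iff_notMem_closure hs, ← infDist_pos_iff_notMem_closure ht]
  by_contra! h
  exact hst.notMem_of_mem_left h.1 h.2

end InfDist

lemma closure_setOf_one_div_le_subset :
    closure {p : EuclideanSpace ℝ (Fin 2) | 0 < p 0 ∧ 1 / p 0 ≤ p 1} ⊆ {p | 1 ≤ p 0 * p 1} := by
  refine closure_minimal (fun p ⟨hp₀, hp₁⟩ => ?_) (isClosed_le continuous_const (by fun_prop))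
  have := mul_le_mul_of_nonneg_left hp₁ hp₀.le
  rwa [mul_one_div_cancel hp₀.ne'] at this

lemma exists_dist_le_axis_hyperbola {ε : ℝ} (hε : 0 < ε) :
    ∃ x ∈ {p : EuclideanSpace ℝ (Fin 2) | p 0 = 0},
      ∃ y ∈ {p : EuclideanSpace ℝ (Fin 2) | 0 < p 0 ∧ 1 / p 0 ≤ p 1}, dist x y ≤ ε := by
  refine ⟨!₂[0, 1 / ε], rfl, !₂[ε, 1 / ε], ⟨hε, le_rfl⟩, le_of_eq ?_⟩
  simp [EuclideanSpace.dist_eq, Fin.sum_univ_two, hε.le]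

/-- In the Euclidean plane, with Ω₁ the vertical axis and Ω₂ the region above the
hyperbola y = 1/x (x > 0), the function D(p) = max{d(p,Ω₁), d(p,Ω₂)} has infimum 0
but is everywhere positive, so the smallest intersecting ball problem has no solution. -/
theorem no_solution_example :
    let Ω₁ : Set (EuclideanSpace ℝ (Fin 2)) := {p | p 0 = 0}
    let Ω₂ : Set (EuclideanSpace ℝ (Fin 2)) := {p | 0 < p 0 ∧ 1 / p 0 ≤ p 1}
    let D : EuclideanSpace ℝ (Fin 2) → ℝ :=
      fun p => max (Metric.infDist p Ω₁) (Metric.infDist p Ω₂)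
    (⨅ p : EuclideanSpace ℝ (Fin 2), D p) = 0 ∧
      ∀ p : EuclideanSpace ℝ (Fin 2), 0 < D p := by
  intro Ω₁ Ω₂ D
  have hΩ₁ : IsClosed Ω₁ := isClosed_eq (by fun_prop) continuous_const
  have hdisj : Disjoint (closure Ω₁) (closure Ω₂) := by
    rw [hΩ₁.closure_eq, Set.disjoint_left]
    intro p (hp : p 0 = 0) hp₂
    have : (1 : ℝ) ≤ p 0 * p 1 := closure_setOf_one_div_le_subset hp₂
    norm_num [hp] at this
  refine ⟨iInf_max_infDist_eq_zero fun ε hε => exists_dist_le_axis_hyperbola hε,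
    max_infDist_pos ⟨0, rfl⟩ ⟨!₂[1, 1], by norm_num [Ω₂]⟩ hdisj⟩
end

section
/- Let Ωᵢ = B̄(ωᵢ; r) (i = 1, …, n) be closed balls of common radius r ≥ 0 in a Hilbert space X with ⋂ᵢ Ωᵢ = ∅. Then for all x ∈ X, max{d(x, Ωᵢ) : i = 1, …, n} = max{‖x − ωᵢ‖ : i = 1, …, n} − r. -/
/-!
The distance from `x` to `closedBall ω r` is `max (dist x ω - r) 0`: the nearest point is where
the segment from `ω` to `x` leaves the ball. Since `t ↦ max (t - r) 0` is monotone it commutes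
with finite maxima, and as the balls have no common point, `x` lies outside one of them, so the
largest `dist x (ω i)` is at least `r` and the truncation at `0` is inactive.
-/

open Metric Finset

theorem infDist_closedBall {E : Type*} [SeminormedAddCommGroup E] [NormedSpace ℝ E] {r : ℝ}
    (hr : 0 ≤ r) (x ω : E) :
    infDist x (closedBall ω r) = max (dist x ω - r) 0 := by
  refine le_antisymm ?_ <| max_le ?_ infDist_nonneg
  · rcases le_or_gt (dist x ω) r with hin | hout
    · rw [infDist_zero_of_mem (mem_closedBall.2 hin)]
      exact le_max_right _ _
    · have hpos : 0 < dist ω x := dist_comm x ω ▸ hr.trans_lt hout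
      set c := r / dist ω x
      set y : E := AffineMap.lineMap ω x c with hy
      have hc : c ≤ 1 := div_le_one_of_le₀ (dist_comm x ω ▸ hout.le) hpos.le
      have hmem : y ∈ closedBall ω r := by
        rw [mem_closedBall, hy, dist_lineMap_left, Real.norm_of_nonneg (by positivity),
          div_mul_cancel₀ _ hpos.ne']
      calc infDist x (closedBall ω r) ≤ dist y x :=
            dist_comm x _ ▸ infDist_le_dist_of_mem hmem
        _ = dist x ω - r := by
            rw [hy, dist_lineMap_right, Real.norm_of_nonneg (sub_nonneg.2 hc), sub_mul, one_mul,
              div_mul_cancel₀ _ hpos.ne', dist_comm]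
        _ ≤ max (dist x ω - r) 0 := le_max_left _ _
  · refine (le_infDist (nonempty_closedBall.2 hr)).2 fun y hy => ?_
    linarith [dist_triangle x y ω, mem_closedBall.1 hy]

theorem sup'_infDist_closedBall {E ι : Type*} [SeminormedAddCommGroup E] [NormedSpace ℝ E]
    {s : Finset ι} (hs : s.Nonempty) (ω : ι → E) {r : ℝ} (hr : 0 ≤ r) {x : E}
    (hx : ∃ i ∈ s, x ∉ closedBall (ω i) r) :
    s.sup' hs (fun i => infDist x (closedBall (ω i) r)) =
      s.sup' hs (fun i => dist x (ω i)) - r := by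
  have hmono : Monotone fun t : ℝ => max (t - r) 0 := fun _ _ hst =>
    max_le_max_right 0 (sub_le_sub_right hst r)
  have hfar : r ≤ s.sup' hs (fun i => dist x (ω i)) := by
    obtain ⟨i, hi, hout⟩ := hx
    exact (le_sup'_iff hs).2 ⟨i, hi, (not_le.1 (mem_closedBall.not.1 hout)).le⟩
  simp_rw [infDist_closedBall hr]
  rw [← Function.comp_def (fun t => max (t - r) 0),
    ← apply_sup'_eq_sup'_comp hs _ fun a b => hmono.map_sup a b, max_eq_left (sub_nonneg.2 hfar)]

/-- For closed balls of common radius r with empty intersection in a Hilbert space,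
the max of the distances to the balls equals the max of distances to the centers
minus r. -/
theorem max_infDist_closedBall_eq
    {X : Type*} [NormedAddCommGroup X] [InnerProductSpace ℝ X]
    (n : ℕ) (hn : 0 < n) (ω : Fin n → X) (r : ℝ) (hr : 0 ≤ r)
    (hint : (⋂ i, Metric.closedBall (ω i) r) = ∅) (x : X) :
    (Finset.univ.sup' (Finset.univ_nonempty_iff.2 ⟨⟨0, hn⟩⟩)
        fun i => Metric.infDist x (Metric.closedBall (ω i) r)) =
      (Finset.univ.sup' (Finset.univ_nonempty_iff.2 ⟨⟨0, hn⟩⟩)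
        fun i => ‖x - ω i‖) - r := by
  simp_rw [← dist_eq_norm]
  have hx : x ∉ ⋂ i, closedBall (ω i) r := hint ▸ Set.notMem_empty x
  simp only [Set.mem_iInter, not_forall] at hx
  obtain ⟨i, hi⟩ := hx
  exact sup'_infDist_closedBall _ ω hr ⟨i, mem_univ i, hi⟩
end

section
/- Let Ωᵢ = B̄(ωᵢ; r) (i = 1, …, n, n > 1) be closed balls of common radius r ≥ 0 in a Hilbert space X with ⋂ᵢ Ωᵢ = ∅. Then the function D(x) = max_i d(x, Ωᵢ) has a unique minimizer, and this minimizer coincides with the unique minimizer of x ↦ max_i ‖x − ωᵢ‖ (the center of the smallest enclosing ball of the points ωᵢ). -/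
/-!
Each `infDist x (closedBall (ω i) r)` equals `max (‖x - ω i‖ - r) 0`, and since the balls have
no common point, `E x = enclosingRadius ω x`, the largest distance to a centre, always exceeds
`r`. Hence `D = E - r` and the two problems have the same minimizers. `E` attains its minimum on
the compact convex hull of the centres, and this minimum is global because the metric projection
onto that hull shortens every distance to a centre. Uniqueness comes from the parallelogram law,
which gives `E (midpoint x y) ^ 2 ≤ (E x ^ 2 + E y ^ 2) / 2 - ‖x - y‖ ^ 2 / 4`.
-/

open Finset Metric

theorem Metric.infDist_closedBall_eq_max {E : Type*} [NormedAddCommGroup E] [NormedSpace ℝ E]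
    (x c : E) {r : ℝ} (hr : 0 ≤ r) :
    infDist x (closedBall c r) = max (‖x - c‖ - r) 0 := by
  refine le_antisymm ?_ <| max_le ?_ infDist_nonneg
  · rcases le_or_gt ‖x - c‖ r with hx | hx
    · rw [infDist_zero_of_mem (mem_closedBall_iff_norm.2 hx)]
      exact le_max_right _ _
    set t := r / ‖x - c‖
    have hpos : 0 < ‖x - c‖ := hr.trans_lt hx
    have ht : t * ‖x - c‖ = r := div_mul_cancel₀ r hpos.ne'
    have ht1 : t ≤ 1 := (div_le_one hpos).2 hx.le
    have hmem : c + t • (x - c) ∈ closedBall c r := by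
      rw [mem_closedBall_iff_norm, add_sub_cancel_left, norm_smul,
        Real.norm_of_nonneg (by positivity), ht]
    calc infDist x (closedBall c r) ≤ dist x (c + t • (x - c)) := infDist_le_dist_of_mem hmem
      _ = (1 - t) * ‖x - c‖ := by
        rw [dist_eq_norm, show x - (c + t • (x - c)) = (1 - t) • (x - c) by module, norm_smul,
          Real.norm_of_nonneg (by linarith)]
      _ ≤ max (‖x - c‖ - r) 0 := by rw [sub_mul, one_mul, ht]; exact le_max_left _ _
  · refine (le_infDist ⟨c, mem_closedBall_self hr⟩).2 fun y hy => ?_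
    have := dist_triangle x y c
    rw [dist_eq_norm x c] at this
    linarith [mem_closedBall.1 hy]

theorem Convex.exists_mem_forall_dist_le {F : Type*} [NormedAddCommGroup F]
    [InnerProductSpace ℝ F] {K : Set F} (hK : Convex ℝ K) (hne : K.Nonempty) (hc : IsComplete K)
    (x : F) :
    ∃ q ∈ K, ∀ w ∈ K, dist q w ≤ dist x w := by
  obtain ⟨q, hqK, hq⟩ := exists_norm_eq_iInf_of_complete_convex hne hc hK x
  have hobtuse := (norm_eq_iInf_iff_real_inner_le_zero hK hqK).1 hq
  refine ⟨q, hqK, fun w hw => ?_⟩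
  have hexpand :
      ‖x - w‖ ^ 2 = ‖x - q‖ ^ 2 - 2 * inner ℝ (x - q) (w - q) + ‖w - q‖ ^ 2 := by
    rw [← norm_sub_sq_real, sub_sub_sub_cancel_right]
  rw [dist_eq_norm, dist_eq_norm, norm_sub_rev q, ← pow_le_pow_iff_left₀ (norm_nonneg _)
    (norm_nonneg _) two_ne_zero, hexpand]
  nlinarith [hobtuse w hw, sq_nonneg ‖x - q‖]

section EnclosingRadius

variable {ι X : Type*} [Fintype ι] [Nonempty ι]

noncomputable def enclosingRadius [Norm X] [Sub X] (ω : ι → X) (x : X) : ℝ :=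
  univ.sup' univ_nonempty fun i => ‖x - ω i‖

variable [NormedAddCommGroup X] (ω : ι → X)

theorem norm_sub_le_enclosingRadius (x : X) (i : ι) : ‖x - ω i‖ ≤ enclosingRadius ω x :=
  le_sup' (fun i => ‖x - ω i‖) (mem_univ i)

theorem exists_enclosingRadius_eq (x : X) : ∃ i, enclosingRadius ω x = ‖x - ω i‖ := by
  obtain ⟨i, -, hi⟩ := exists_mem_eq_sup' univ_nonempty fun i => ‖x - ω i‖
  exact ⟨i, hi⟩

theorem enclosingRadius_nonneg (x : X) : 0 ≤ enclosingRadius ω x :=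
  (norm_nonneg _).trans (norm_sub_le_enclosingRadius ω x (Classical.arbitrary ι))

theorem continuous_enclosingRadius : Continuous (enclosingRadius ω) :=
  Continuous.finset_sup'_apply _ fun _ _ => continuous_id.sub continuous_const |>.norm

theorem enclosingRadius_le_of_forall_norm_sub_le {x y : X} (h : ∀ i, ‖x - ω i‖ ≤ ‖y - ω i‖) :
    enclosingRadius ω x ≤ enclosingRadius ω y :=
  sup'_le _ _ fun i _ => (h i).trans (norm_sub_le_enclosingRadius ω y i)

theorem radius_lt_enclosingRadius {r : ℝ} (h : (⋂ i, closedBall (ω i) r) = ∅) (x : X) :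
    r < enclosingRadius ω x := by
  by_contra! hx
  have : x ∈ ⋂ i, closedBall (ω i) r := Set.mem_iInter.2 fun i =>
    mem_closedBall_iff_norm.2 <| (norm_sub_le_enclosingRadius ω x i).trans hx
  simp [h] at this

theorem sup'_infDist_closedBall_eq [NormedSpace ℝ X] {r : ℝ} (hr : 0 ≤ r) (x : X) :
    univ.sup' univ_nonempty (fun i => infDist x (closedBall (ω i) r)) =
      max (enclosingRadius ω x - r) 0 := by
  have hmono : Monotone fun t : ℝ => max (t - r) 0 := fun _ _ hab =>
    max_le_max (sub_le_sub_right hab r) le_rfl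
  simp only [infDist_closedBall_eq_max _ _ hr]
  exact (apply_sup'_eq_sup'_comp _ (fun t => max (t - r) 0) fun _ _ => hmono.map_max).symm

section InnerProductSpace

variable [InnerProductSpace ℝ X]

theorem enclosingRadius_midpoint_sq_le (x y : X) :
    enclosingRadius ω (midpoint ℝ x y) ^ 2 ≤
      (enclosingRadius ω x ^ 2 + enclosingRadius ω y ^ 2) / 2 - ‖x - y‖ ^ 2 / 4 := by
  obtain ⟨i, hi⟩ := exists_enclosingRadius_eq ω (midpoint ℝ x y)
  have hpar := parallelogram_law_with_norm ℝ (x - ω i) (y - ω i)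
  have hmid : midpoint ℝ x y - ω i = (2 : ℝ)⁻¹ • ((x - ω i) + (y - ω i)) := by
    rw [midpoint_eq_smul_add, invOf_eq_inv]; module
  rw [sub_sub_sub_cancel_right] at hpar
  rw [hi, hmid, norm_smul, Real.norm_of_nonneg (by norm_num)]
  nlinarith [norm_sub_le_enclosingRadius ω x i, norm_sub_le_enclosingRadius ω y i,
    norm_nonneg (x - ω i), norm_nonneg (y - ω i)]

theorem eq_of_isMinOn_enclosingRadius {x y : X} (hx : IsMinOn (enclosingRadius ω) Set.univ x)
    (hy : IsMinOn (enclosingRadius ω) Set.univ y) : x = y := by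
  have hxy : enclosingRadius ω x = enclosingRadius ω y :=
    le_antisymm (isMinOn_univ_iff.1 hx y) (isMinOn_univ_iff.1 hy x)
  have hmid := isMinOn_univ_iff.1 hx (midpoint ℝ x y)
  have hsq := enclosingRadius_midpoint_sq_le ω x y
  rw [← hxy] at hsq
  have hdist : ‖x - y‖ ^ 2 ≤ 0 := by nlinarith [enclosingRadius_nonneg ω x]
  rw [← sub_eq_zero, ← norm_eq_zero]
  exact pow_eq_zero_iff two_ne_zero |>.1 (le_antisymm hdist (sq_nonneg _))

theorem exists_isMinOn_enclosingRadius : ∃ x, IsMinOn (enclosingRadius ω) Set.univ x := by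
  set K := convexHull ℝ (Set.range ω)
  have hK : IsCompact K := (Set.finite_range ω).isCompact_convexHull ℝ
  have hω : ∀ i, ω i ∈ K := fun i => subset_convexHull ℝ _ (Set.mem_range_self i)
  obtain ⟨p, -, hp⟩ := hK.exists_isMinOn ⟨_, hω (Classical.arbitrary ι)⟩
    (continuous_enclosingRadius ω).continuousOn
  refine ⟨p, isMinOn_univ_iff.2 fun x => ?_⟩
  obtain ⟨q, hqK, hq⟩ := (convex_convexHull ℝ _).exists_mem_forall_dist_le
    ⟨_, hω (Classical.arbitrary ι)⟩ hK.isComplete x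
  exact (hp hqK).trans <| enclosingRadius_le_of_forall_norm_sub_le ω fun i => by
    simpa only [dist_eq_norm] using hq _ (hω i)

end InnerProductSpace

end EnclosingRadius

/-- For closed balls of common radius r with empty intersection in a Hilbert space,
the smallest intersecting ball problem has a unique solution, which coincides with
the solution of the smallest enclosing ball problem for the centers. -/
theorem unique_min_balls_common_radius
    {X : Type*} [NormedAddCommGroup X] [InnerProductSpace ℝ X]
    (n : ℕ) (hn : 1 < n) (ω : Fin n → X) (r : ℝ) (hr : 0 ≤ r)
    (hint : (⋂ i, Metric.closedBall (ω i) r) = ∅) :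
    (∃! xbar : X, IsMinOn
      (fun x => Finset.univ.sup' (Finset.univ_nonempty_iff.2 ⟨⟨0, by omega⟩⟩)
        fun i => Metric.infDist x (Metric.closedBall (ω i) r)) Set.univ xbar) ∧
    ∀ xbar : X, IsMinOn
      (fun x => Finset.univ.sup' (Finset.univ_nonempty_iff.2 ⟨⟨0, by omega⟩⟩)
        fun i => Metric.infDist x (Metric.closedBall (ω i) r)) Set.univ xbar ↔
      IsMinOn (fun x => Finset.univ.sup' (Finset.univ_nonempty_iff.2 ⟨⟨0, by omega⟩⟩)
        fun i => ‖x - ω i‖) Set.univ xbar := by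
  have : Nonempty (Fin n) := ⟨⟨0, by omega⟩⟩
  have hD : (fun x => univ.sup' univ_nonempty fun i => infDist x (closedBall (ω i) r)) =
      fun x => enclosingRadius ω x - r := funext fun x => by
    rw [sup'_infDist_closedBall_eq ω hr,
      max_eq_left (sub_nonneg.2 (radius_lt_enclosingRadius ω hint x).le)]
  have hiff (x : X) : IsMinOn (fun x => enclosingRadius ω x - r) Set.univ x ↔
      IsMinOn (enclosingRadius ω) Set.univ x := by
    simp only [isMinOn_univ_iff, sub_le_sub_iff_right]
  obtain ⟨c, hc⟩ := exists_isMinOn_enclosingRadius ω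
  rw [hD]
  exact ⟨⟨c, (hiff c).2 hc, fun y hy => eq_of_isMinOn_enclosingRadius ω ((hiff y).1 hy) hc⟩,
    hiff⟩
end

section
/- Let a₁, a₂, a₃ be three points in ℝ² with the Euclidean norm, not all equal, such that ⟨a₂ − a₁, a₃ − a₁⟩ ≤ 0 (the angle at a₁ is non-acute). Then the midpoint (a₂ + a₃)/2 is the unique minimizer of f(x) = max{‖x − a₁‖, ‖x − a₂‖, ‖x − a₃‖}. -/
/-!
The radius function is everywhere at least `‖a₂ - a₃‖ / 2`, by the triangle inequality through
`a₂` and `a₃`. The midpoint `m` of `a₂ a₃` attains this value because the non-acute angle at `a₁`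
puts `a₁` in the disc with diameter `a₂ a₃`: by Apollonius and the law of cosines,
`‖a₁ - m‖² = (‖a₂ - a₃‖ / 2)² + ⟪a₂ - a₁, a₃ - a₁⟫`. Any other minimizer is within
`‖a₂ - a₃‖ / 2` of both `a₂` and `a₃`, which in a strictly convex space forces it to be `m`.
-/

open EuclideanGeometry RealInnerProductSpace

theorem half_dist_le_max_dist {X : Type*} [PseudoMetricSpace X] (x b c : X) :
    dist b c / 2 ≤ max (dist x b) (dist x c) := by
  linarith [dist_triangle_left b c x, le_max_left (dist x b) (dist x c),
    le_max_right (dist x b) (dist x c)]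

section NormedAddTorsor

variable {V P : Type*} [NormedAddCommGroup V] [NormedSpace ℝ V] [MetricSpace P]
  [NormedAddTorsor V P]

theorem max_dist_midpoint_le_half_dist {a b c : P}
    (ha : dist a (midpoint ℝ b c) ≤ dist b c / 2) :
    max (max (dist (midpoint ℝ b c) a) (dist (midpoint ℝ b c) b)) (dist (midpoint ℝ b c) c) ≤
      dist b c / 2 := by
  simp only [dist_midpoint_left, dist_midpoint_right, Real.norm_two, max_le_iff]
  exact ⟨⟨dist_comm a _ ▸ ha, by linarith⟩, by linarith⟩

theorem eq_midpoint_of_max_dist_le_half_dist [StrictConvexSpace ℝ V] {x b c : P}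
    (h : max (dist x b) (dist x c) ≤ dist b c / 2) : x = midpoint ℝ b c := by
  have hb : dist b x ≤ dist b c / 2 := dist_comm x b ▸ (le_max_left _ _).trans h
  have hc : dist x c ≤ dist b c / 2 := (le_max_right _ _).trans h
  have := dist_triangle b x c
  exact eq_midpoint_of_dist_eq_half (E := V) (by linarith) (by linarith)

end NormedAddTorsor

section Euclidean

variable {V P : Type*} [NormedAddCommGroup V] [InnerProductSpace ℝ V] [MetricSpace P]
  [NormedAddTorsor V P]

theorem dist_midpoint_le_half_dist_of_inner_vsub_nonpos {a b c : P}
    (h : ⟪b -ᵥ a, c -ᵥ a⟫ ≤ 0) : dist a (midpoint ℝ b c) ≤ dist b c / 2 := by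
  have apollonius := dist_sq_add_dist_sq_eq_two_mul_dist_midpoint_sq_add_half_dist_sq a b c
  have cosines : dist b c ^ 2 = dist a b ^ 2 - 2 * ⟪b -ᵥ a, c -ᵥ a⟫ + dist a c ^ 2 := by
    rw [dist_comm a b, dist_comm a c, dist_eq_norm_vsub V, dist_eq_norm_vsub V,
      dist_eq_norm_vsub V, ← vsub_sub_vsub_cancel_right b c a, norm_sub_sq_real]
  have hsq : dist a (midpoint ℝ b c) ^ 2 ≤ (dist b c / 2) ^ 2 := by nlinarith
  exact (pow_le_pow_iff_left₀ dist_nonneg (by positivity) two_ne_zero).1 hsq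

end Euclidean

theorem midpoint_unique_min_of_obtuse_general
    (a₁ a₂ a₃ : EuclideanSpace ℝ (Fin 2))
    (hangle : inner ℝ (a₂ - a₁) (a₃ - a₁) ≤ (0 : ℝ)) :
    IsMinOn (fun x => max (max ‖x - a₁‖ ‖x - a₂‖) ‖x - a₃‖) Set.univ
        ((2 : ℝ)⁻¹ • (a₂ + a₃)) ∧
      ∀ x : EuclideanSpace ℝ (Fin 2),
        IsMinOn (fun x => max (max ‖x - a₁‖ ‖x - a₂‖) ‖x - a₃‖) Set.univ x →
          x = (2 : ℝ)⁻¹ • (a₂ + a₃) := by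
  simp only [← dist_eq_norm, ← invOf_eq_inv, ← midpoint_eq_smul_add]
  have hm := max_dist_midpoint_le_half_dist
    (dist_midpoint_le_half_dist_of_inner_vsub_nonpos (P := EuclideanSpace ℝ (Fin 2)) hangle)
  have hbound (x : EuclideanSpace ℝ (Fin 2)) :
      max (dist x a₂) (dist x a₃) ≤ max (max (dist x a₁) (dist x a₂)) (dist x a₃) := by
    rw [max_assoc]; exact le_max_right _ _
  refine ⟨fun x _ => hm.trans ((half_dist_le_max_dist x a₂ a₃).trans (hbound x)),
    fun x hx => eq_midpoint_of_max_dist_le_half_dist ?_⟩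
  exact (hbound x).trans ((hx (Set.mem_univ _)).trans hm)

/-- For three points in the Euclidean plane, not all equal, with a non-acute angle
at `a₁`, the midpoint of `a₂` and `a₃` is the unique minimizer of
`f(x) = max{‖x - a₁‖, ‖x - a₂‖, ‖x - a₃‖}`. -/
theorem midpoint_unique_min_of_obtuse
    (a₁ a₂ a₃ : EuclideanSpace ℝ (Fin 2))
    (hne : ¬(a₁ = a₂ ∧ a₂ = a₃))
    (hangle : inner ℝ (a₂ - a₁) (a₃ - a₁) ≤ (0 : ℝ)) :
    IsMinOn (fun x => max (max ‖x - a₁‖ ‖x - a₂‖) ‖x - a₃‖) Set.univ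
        ((2 : ℝ)⁻¹ • (a₂ + a₃)) ∧
      ∀ x : EuclideanSpace ℝ (Fin 2),
        IsMinOn (fun x => max (max ‖x - a₁‖ ‖x - a₂‖) ‖x - a₃‖) Set.univ x →
          x = (2 : ℝ)⁻¹ • (a₂ + a₃) :=
  midpoint_unique_min_of_obtuse_general a₁ a₂ a₃ hangle
end
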